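/- arXiv:2510.26736 — 3 statements merged into one kernel-verified Lean document; each statement's English description precedes it below -/
import Mathlib

section
/- Let Γ be a type, let ι := Finset Γ be directed by inclusion with the filter atTop, and for each i ∈ ι let B i be a unital C*-algebra. For every a ∈ lp B ∞, the distance from a to the direct C*-sum K (in the supremum norm of lp B ∞) equals the limit superior of the net i ↦ ‖a i‖ along atTop: Metric.infDist a K = limsup_{atTop} ‖a i‖. (Equivalently, the quotient norm of the class of a in lp B ∞ / K equals limsup_{i↗} ‖a i‖.) -/
open Filter
open scoped ENNReal

/-- The distance of `a ∈ lp B ∞` to the direct C*-sum `K` (i.e. the quotient norm of the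
class of `a` in `lp B ∞ / K`) equals the limit superior of `‖a i‖` along `atTop`. -/
theorem infDist_directSum_eq_limsup {Γ : Type*} (B : Finset Γ → Type*)
    [∀ i, NormedRing (B i)] [∀ i, StarRing (B i)] [∀ i, CStarRing (B i)]
    [∀ i, NormedAlgebra ℂ (B i)] [∀ i, StarModule ℂ (B i)]
    [∀ i, NormOneClass (B i)] [∀ i, CompleteSpace (B i)]
    (a : lp B ∞) :
    Metric.infDist a {x : lp B ∞ | Tendsto (fun i : Finset Γ => ‖x i‖) atTop (nhds 0)} =
      Filter.limsup (fun i : Finset Γ => ‖a i‖) atTop := by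
  set K := {x : lp B ∞ | Tendsto (fun i : Finset Γ => ‖x i‖) atTop (nhds 0)} with hKdef
  set L := Filter.limsup (fun i : Finset Γ => ‖a i‖) atTop with hLdef
  have hKne : K.Nonempty := ⟨0, by
    simp only [hKdef, Set.mem_setOf_eq, lp.coeFn_zero, Pi.zero_apply, norm_zero]
    exact tendsto_const_nhds⟩
  have hbdd : IsBoundedUnder (· ≤ ·) atTop (fun i : Finset Γ => ‖a i‖) :=
    isBoundedUnder_of ⟨‖a‖, fun i => lp.norm_apply_le_norm (by norm_num) a i⟩
  have hbdd' : IsBoundedUnder (· ≥ ·) atTop (fun i : Finset Γ => ‖a i‖) :=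
    isBoundedUnder_of ⟨0, fun i => norm_nonneg _⟩
  have hcob : IsCoboundedUnder (· ≤ ·) atTop (fun i : Finset Γ => ‖a i‖) :=
    hbdd'.isCoboundedUnder_flip
  have hL0 : 0 ≤ L :=
    le_limsup_of_frequently_le
      ((Filter.Eventually.frequently (Filter.Eventually.of_forall
        fun i => norm_nonneg (a i)))) hbdd
  refine le_antisymm ?_ ?_
  · -- infDist ≤ L
    refine le_of_forall_pos_le_add fun ε hε => ?_
    have hev : ∀ᶠ i in atTop, ‖a i‖ < L + ε :=
      eventually_lt_of_limsup_lt (by linarith) hbdd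
    set f : ∀ i : Finset Γ, B i := fun i => if L + ε < ‖a i‖ then a i else 0 with hfdef
    have hf : Memℓp f ∞ := by
      apply memℓp_infty
      refine ⟨‖a‖, ?_⟩
      rintro r ⟨i, rfl⟩
      simp only [hfdef]
      split
      · exact lp.norm_apply_le_norm (by norm_num) a i
      · simp
    set x : lp B ∞ := ⟨f, hf⟩ with hxdef
    have hxK : x ∈ K := by
      simp only [hKdef, Set.mem_setOf_eq]
      have hzero : ∀ᶠ i in atTop, ‖x i‖ = 0 := by
        filter_upwards [hev] with i hi
        have : ¬ (L + ε < ‖a i‖) := not_lt.mpr hi.le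
        show ‖f i‖ = 0
        simp [hfdef, this]
      exact Tendsto.congr' (hzero.mono fun i h => h.symm) tendsto_const_nhds
    have hdist : dist a x ≤ L + ε := by
      rw [dist_eq_norm]
      refine lp.norm_le_of_forall_le (by linarith) fun i => ?_
      have hsub : (a - x) i = a i - x i := by
        rw [lp.coeFn_sub]; rfl
      rw [hsub]
      show ‖a i - f i‖ ≤ L + ε
      by_cases h : L + ε < ‖a i‖
      · simp [hfdef, h]
        linarith
      · simp [hfdef, h]
        exact le_of_not_gt h
    calc Metric.infDist a K ≤ dist a x := Metric.infDist_le_dist_of_mem hxK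
      _ ≤ L + ε := hdist
  · -- L ≤ infDist
    by_contra hcon
    push_neg at hcon
    obtain ⟨x, hx, hdx⟩ := (Metric.infDist_lt_iff hKne).mp hcon
    have key : L ≤ dist a x := ?_
    · linarith
    refine le_of_forall_pos_le_add fun ε hε => ?_
    have hev : ∀ᶠ i in atTop, ‖x i‖ < ε := hx.eventually (gt_mem_nhds hε)
    refine limsup_le_of_le hcob ?_
    filter_upwards [hev] with i hi
    have h1 : ‖a i‖ ≤ ‖(a - x) i‖ + ‖x i‖ := by
      have : a i = (a - x) i + x i := by
        rw [lp.coeFn_sub]; simp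
      rw [this]
      exact norm_add_le _ _
    have h2 : ‖(a - x) i‖ ≤ ‖a - x‖ := lp.norm_apply_le_norm (by norm_num) (a - x) i
    rw [dist_eq_norm]
    linarith
end

section
/- Let Γ be a type, let ι := Finset Γ be directed by inclusion with the filter atTop, and for each i ∈ ι let A i be a commutative unital C*-algebra equipped with a bilinear map P i : A i → A i → A i satisfying the Leibniz rule P i (x*y) z = x * (P i y z) + (P i x z) * y and the star-compatibility law star (P i x y) = P i (star x) (star y) for all x, y, z ∈ A i. Let S be a subset of the full C*-product lp A ∞ closed under star. Then the set D_S := {a ∈ lp A ∞ : for every b ∈ S, the net i ↦ ‖P i (a i) (b i)‖ tends to 0 along atTop} is a star-subalgebra of lp A ∞: it is closed under addition, scalar multiplication, multiplication, and star. -/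
open Filter
open scoped ENNReal

/-- Classical global observables: for commutative unital C*-algebras `A i` carrying
Poisson-type brackets `P i` (bilinear, Leibniz in the first argument, compatible with
star) and a star-closed subset `S` of the full C*-product `lp A ∞`, the set of bounded
families whose brackets with all elements of `S` vanish in norm along `atTop` is a
star-subalgebra of `lp A ∞`. -/
theorem classical_global_observables_starSubalgebra {Γ : Type*} (A : Finset Γ → Type*)
    [∀ i, NormedCommRing (A i)] [∀ i, StarRing (A i)] [∀ i, CStarRing (A i)]
    [∀ i, NormedAlgebra ℂ (A i)] [∀ i, StarModule ℂ (A i)]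
    [∀ i, NormOneClass (A i)] [∀ i, CompleteSpace (A i)]
    (P : ∀ i, A i →ₗ[ℂ] A i →ₗ[ℂ] A i)
    (hLeibniz : ∀ i (x y z : A i), P i (x * y) z = x * P i y z + P i x z * y)
    (hStar : ∀ i (x y : A i), star (P i x y) = P i (star x) (star y))
    (S : Set (lp A ∞)) (hS : ∀ b ∈ S, star b ∈ S)
    (D : Set (lp A ∞))
    (hD : D = {a : lp A ∞ | ∀ b ∈ S,
      Tendsto (fun i : Finset Γ => ‖P i (a i) (b i)‖) atTop (nhds 0)}) :
    (∀ a a' : lp A ∞, a ∈ D → a' ∈ D → a + a' ∈ D) ∧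
    (∀ (c : ℂ) (a : lp A ∞), a ∈ D → c • a ∈ D) ∧
    (∀ a a' : lp A ∞, a ∈ D → a' ∈ D → a * a' ∈ D) ∧
    (∀ a : lp A ∞, a ∈ D → star a ∈ D) := by
  subst hD
  refine ⟨?_, ?_, ?_, ?_⟩
  · intro a a' ha ha' b hb
    have h := (ha b hb).add (ha' b hb)
    rw [add_zero] at h
    refine squeeze_zero (fun i => norm_nonneg _) (fun i => ?_) h
    simp only [lp.coeFn_add, Pi.add_apply, map_add, LinearMap.add_apply]
    exact norm_add_le _ _
  · intro c a ha b hb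
    have h := (ha b hb).const_mul ‖c‖
    rw [mul_zero] at h
    refine h.congr fun i => ?_
    simp [lp.coeFn_smul, norm_smul]
  · intro a a' ha ha' b hb
    have h := ((ha b hb).const_mul ‖a'‖).add ((ha' b hb).const_mul ‖a‖)
    simp only [mul_zero, zero_add] at h
    refine squeeze_zero (fun i => norm_nonneg _) (fun i => ?_) h
    calc ‖P i ((a * a') i) (b i)‖
        = ‖a i * P i (a' i) (b i) + P i (a i) (b i) * a' i‖ := by
          rw [lp.infty_coeFn_mul, Pi.mul_apply, hLeibniz]
      _ ≤ ‖a i * P i (a' i) (b i)‖ + ‖P i (a i) (b i) * a' i‖ := norm_add_le _ _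
      _ ≤ ‖a i‖ * ‖P i (a' i) (b i)‖ + ‖P i (a i) (b i)‖ * ‖a' i‖ :=
          add_le_add (norm_mul_le _ _) (norm_mul_le _ _)
      _ ≤ ‖a‖ * ‖P i (a' i) (b i)‖ + ‖P i (a i) (b i)‖ * ‖a'‖ := by
          gcongr
          · exact lp.norm_apply_le_norm ENNReal.top_ne_zero a i
          · exact lp.norm_apply_le_norm ENNReal.top_ne_zero a' i
      _ = ‖a'‖ * ‖P i (a i) (b i)‖ + ‖a‖ * ‖P i (a' i) (b i)‖ := by ring
  · intro a ha b hb
    have h := ha (star b) (hS b hb)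
    refine h.congr fun i => ?_
    have : P i ((star a) i) (b i) = star (P i (a i) ((star b) i)) := by
      simp [hStar, lp.coeFn_star]
    rw [this, norm_star]
end

section
/- Let Γ be a type, for each x ∈ Γ let X x be a measurable space, and let Ω := Π x, X x carry the product σ-algebra. Suppose f : Ω → ℝ is measurable with respect to the product σ-algebra and that for every finite set Λ : Finset Γ and all ω, ρ ∈ Ω with ω x = ρ x for all x ∉ Λ, one has f ω = f ρ. Then f is measurable with respect to the tail σ-algebra 𝒯 := ⨅_{Λ : Finset Γ} MeasurableSpace.comap (restriction of configurations to the complement of Λ). -/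
open MeasureTheory

/-- The tail σ-algebra on the configuration space `Ω = Π x, X x`: the infimum over all
finite regions `Λ` of the σ-algebras generated by the coordinates outside `Λ`. -/
def tailSigmaAlgebra {Γ : Type*} (X : Γ → Type*) [∀ x, MeasurableSpace (X x)] :
    MeasurableSpace (∀ x, X x) :=
  ⨅ Λ : Finset Γ,
    MeasurableSpace.comap (fun (ω : ∀ x, X x) (x : {x : Γ // x ∉ Λ}) => ω x.val)
      MeasurableSpace.pi

/-- A function on the product configuration space that is measurable for the product
σ-algebra and does not depend on the coordinates in any finite region is measurable
with respect to the tail σ-algebra. -/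
theorem measurable_tail_of_local_independence {Γ : Type*} (X : Γ → Type*)
    [∀ x, MeasurableSpace (X x)] (f : (∀ x, X x) → ℝ)
    (hf : Measurable f)
    (hloc : ∀ (Λ : Finset Γ) (ω ρ : ∀ x, X x), (∀ x ∉ Λ, ω x = ρ x) → f ω = f ρ) :
    Measurable[tailSigmaAlgebra X] f := by
  classical
  by_cases hne : Nonempty (∀ x, X x)
  · obtain ⟨ω₀⟩ := hne
    rw [tailSigmaAlgebra, measurable_iff_comap_le, le_iInf_iff]
    intro Λ
    -- factor f through the restriction to Λᶜ
    set r : (∀ x, X x) → (∀ x : {x : Γ // x ∉ Λ}, X x.val) :=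
      fun ω x => ω x.val with hr
    set g : (∀ x : {x : Γ // x ∉ Λ}, X x.val) → ℝ :=
      fun η => f (fun x => if h : x ∈ Λ then ω₀ x else η ⟨x, h⟩) with hg
    have hgmeas : Measurable g := by
      apply hf.comp
      apply measurable_pi_lambda
      intro x
      by_cases h : x ∈ Λ
      · simp only [h, dif_pos]
        exact measurable_const
      · simp only [h, dif_neg, not_false_iff]
        exact measurable_pi_apply _
    have hfactor : f = g ∘ r := by
      funext ω
      apply hloc Λ
      intro x hx
      simp [hg, hr, hx]
    rw [hfactor]
    calc MeasurableSpace.comap (g ∘ r) inferInstance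
        = MeasurableSpace.comap r (MeasurableSpace.comap g inferInstance) := by
          rw [MeasurableSpace.comap_comp]
      _ ≤ MeasurableSpace.comap r MeasurableSpace.pi :=
          MeasurableSpace.comap_mono (measurable_iff_comap_le.mp hgmeas)
  · haveI : IsEmpty (∀ x, X x) := not_nonempty_iff.mp hne
    exact @measurable_of_empty _ _ (tailSigmaAlgebra X) _ _ f
end
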